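/- Let E ⊂ 𝕋^N be a set of class C² and F ⊂ 𝕋^N a set of finite perimeter. Then there exists a constant C = C(E) > 0, independent of F, such that P_{𝕋^N}(F) − P_{𝕋^N}(E) ≥ −C|E Δ F|. -/

import Mathlib

open MeasureTheory Metric Set Filter
open scoped ENNReal NNReal Topology RealInnerProductSpace

noncomputable section
open scoped Classical

/-- `RN N` models (the universal cover of) the flat torus `𝕋^N`:
periodic subsets of `ℝ^N` represent subsets of `𝕋^N`. -/
abbrev RN (N : ℕ) := EuclideanSpace ℝ (Fin N)

variable (N : ℕ)

/-- the `i`-th standard basis vector -/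
def eV (i : Fin N) : RN N := EuclideanSpace.single i (1 : ℝ)

/-- the integer lattice vector associated to `z : Fin N → ℤ` -/
def intVec (z : Fin N → ℤ) : RN N := ∑ i, (z i : ℝ) • eV N i

/-- the fundamental domain `[0,1)^N` of the unit torus -/
def Qcube : Set (RN N) := {x | ∀ i, x i ∈ Set.Ico (0 : ℝ) 1}

/-- a set representing a subset of the torus, i.e. invariant under integer translations -/
def PerSet (E : Set (RN N)) : Prop := ∀ z : Fin N → ℤ, (fun x => x + intVec N z) ⁻¹' E = E

/-- a function on the torus, i.e. invariant under integer translations -/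
def PerFun {α : Type*} (f : RN N → α) : Prop :=
  ∀ (z : Fin N → ℤ) (x : RN N), f (x + intVec N z) = f x

/-- volume (measure) of a subset of the torus -/
def tvol (E : Set (RN N)) : ℝ≥0∞ := volume (E ∩ Qcube N)

/-- divergence of a vector field -/
def divg (X : RN N → RN N) (x : RN N) : ℝ := ∑ i, fderiv ℝ X x (eV N i) i

/-- the perimeter `P_{𝕋^N}(E)` of `E` in the torus, defined by the
Gauss-Green / distributional definition -/
def tper (E : Set (RN N)) : ℝ≥0∞ :=
  ⨆ X : {X : RN N → RN N // ContDiff ℝ 1 X ∧ PerFun N X ∧ ∀ x, ‖X x‖ ≤ 1},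
    ENNReal.ofReal (∫ x in E ∩ Qcube N, divg N X.1 x)

/-- `α(E,F)`: the `L¹`-distance between two subsets of the torus, modulo translations -/
def adist (E F : Set (RN N)) : ℝ≥0∞ :=
  ⨅ y : RN N, tvol N (symmDiff E ((fun x => y + x) '' F))

/-- `u_E = χ_E - χ_{Eᶜ}` -/
def uInd (E : Set (RN N)) (x : RN N) : ℝ := if x ∈ E then 1 else -1

/-- `m = |E| - |𝕋^N ∖ E|` -/
def mOf (E : Set (RN N)) : ℝ := (tvol N E).toReal - (tvol N Eᶜ).toReal

/-- `v` is the potential `v_E`, i.e. the (periodic, zero-average) weak solution of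
`-Δ v = u_E - m` on the torus -/
structure IsPotential (E : Set (RN N)) (v : RN N → ℝ) : Prop where
  contDiff : ContDiff ℝ 1 v
  periodic : PerFun N v
  zeroAvg : (∫ x in Qcube N, v x) = 0
  weakEq : ∀ φ : RN N → ℝ, ContDiff ℝ (⊤ : ℕ∞) φ → PerFun N φ →
    (∫ x in Qcube N, ⟪gradient v x, gradient φ x⟫) =
      ∫ x in Qcube N, (uInd N E x - mOf N E) * φ x

/-- the Dirichlet energy `∫_{𝕋^N} |∇v|²` -/
def dirichlet (v : RN N → ℝ) : ℝ := ∫ x in Qcube N, ‖gradient v x‖ ^ 2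

/-- the nonlocal isoperimetric functional `J(E) = P(E) + γ ∫ |∇ v_E|²`
(the potential `v = v_E` is passed explicitly) -/
def nlJ (γ : ℝ) (E : Set (RN N)) (v : RN N → ℝ) : ℝ≥0∞ :=
  tper N E + ENNReal.ofReal (γ * dirichlet N v)

/-- signed distance from `∂E`, negative inside `E` -/
def sd (E : Set (RN N)) (x : RN N) : ℝ :=
  if x ∈ E then -Metric.infDist x (frontier E) else Metric.infDist x (frontier E)

/-- `E` is a set of class `C^k`: the signed distance is `C^k` near `∂E`, with unit gradient
on `∂E` -/
def SmoothBdry (k : ℕ∞) (E : Set (RN N)) : Prop :=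
  ∃ U : Set (RN N), IsOpen U ∧ frontier E ⊆ U ∧ ContDiffOn ℝ k (sd N E) U ∧
    ∀ x ∈ frontier E, ‖gradient (sd N E) x‖ = 1

/-- the outer unit normal (extended off `∂E` via the signed distance) -/
def nv (E : Set (RN N)) (x : RN N) : RN N := gradient (sd N E) x

/-- Laplacian -/
def lapl (f : RN N → ℝ) (x : RN N) : ℝ :=
  ∑ i, fderiv ℝ (fun y => fderiv ℝ f y (eV N i)) x (eV N i)

/-- `H_{∂E}`, the sum of the principal curvatures: the Laplacian of the signed distance -/
def meanCurv (E : Set (RN N)) : RN N → ℝ := lapl N (sd N E)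

/-- `|B_{∂E}|²`, the sum of the squares of the principal curvatures: the squared Frobenius
norm of the Hessian of the signed distance -/
def sff2 (E : Set (RN N)) (x : RN N) : ℝ :=
  ∑ i, ∑ j, (fderiv ℝ (fun y => fderiv ℝ (sd N E) y (eV N i)) x (eV N j)) ^ 2

/-- the surface measure `H^{N-1} ⌊ ∂E` (in the torus) -/
def sμ (E : Set (RN N)) : Measure (RN N) := (μH[(N : ℝ) - 1]).restrict (frontier E ∩ Qcube N)

/-- tangential gradient `D_τ φ` on `∂E` -/
def tgrad (E : Set (RN N)) (φ : RN N → ℝ) (x : RN N) : RN N :=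
  gradient φ x - ⟪gradient φ x, nv N E x⟫ • nv N E x

/-- tangential divergence `div_τ X` on `∂E` -/
def tdiv (E : Set (RN N)) (X : RN N → RN N) (x : RN N) : ℝ :=
  divg N X x - ⟪fderiv ℝ X x (nv N E x), nv N E x⟫

/-- `G` is the Green's function of `-Δ` on the torus: `-Δ_y G(x,·) = δ_x - 1`,
`∫ G(x,·) = 0`, in the weak sense -/
structure IsGreen (G : RN N → RN N → ℝ) : Prop where
  zeroAvg : ∀ x, (∫ y in Qcube N, G x y) = 0
  weakEq : ∀ (x : RN N) (φ : RN N → ℝ), ContDiff ℝ (⊤ : ℕ∞) φ → PerFun N φ →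
    (∫ y in Qcube N, ⟪gradient (G x) y, gradient φ y⟫) = φ x - ∫ y in Qcube N, φ y

/-- the quadratic form `∂²J(E)[φ]` -/
def secondVar (γ : ℝ) (E : Set (RN N)) (v : RN N → ℝ) (G : RN N → RN N → ℝ)
    (φ : RN N → ℝ) : ℝ :=
  (∫ x, (‖tgrad N E φ x‖ ^ 2 - sff2 N E x * φ x ^ 2) ∂ sμ N E)
  + 8 * γ * (∫ x, (∫ y, G x y * φ x * φ y ∂ sμ N E) ∂ sμ N E)
  + 4 * γ * ∫ x, ⟪gradient v x, nv N E x⟫ * φ x ^ 2 ∂ sμ N E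

/-- `E` is a regular critical set of `J`: a `C³` (periodic) set satisfying the
Euler-Lagrange equation `H_{∂E} + 4γ v_E = λ` on `∂E` -/
structure IsRegCritical (γ : ℝ) (E : Set (RN N)) (v : RN N → ℝ) : Prop where
  meas : MeasurableSet E
  per : PerSet N E
  smooth : SmoothBdry N 3 E
  pot : IsPotential N E v
  euler : ∃ lam : ℝ, ∀ x ∈ frontier E, meanCurv N E x + 4 * γ * v x = lam

/-- `φ ∈ T^⊥(∂E)`: a (C¹, periodic) function on `∂E` with zero average and orthogonal
to the infinitesimal translations `ν_i` -/
def Tperp (E : Set (RN N)) (φ : RN N → ℝ) : Prop :=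
  ContDiff ℝ 1 φ ∧ PerFun N φ ∧ (∫ x, φ x ∂ sμ N E) = 0 ∧
    (∫ x, φ x • nv N E x ∂ sμ N E) = 0

/-- `J` has positive second variation at `E`: `∂²J(E)[φ] > 0` for all
`φ ∈ T^⊥(∂E) ∖ {0}` -/
def PosSecondVar (γ : ℝ) (E : Set (RN N)) (v : RN N → ℝ) (G : RN N → RN N → ℝ) : Prop :=
  ∀ φ : RN N → ℝ, Tperp N E φ → (∫ x, φ x ^ 2 ∂ sμ N E) ≠ 0 →
    0 < secondVar N γ E v G φ

/-- `H¹(∂E)` norm -/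
def h1norm (E : Set (RN N)) (φ : RN N → ℝ) : ℝ :=
  Real.sqrt ((∫ x, φ x ^ 2 ∂ sμ N E) + ∫ x, ‖tgrad N E φ x‖ ^ 2 ∂ sμ N E)

/-- `L²(∂E)` norm -/
def l2norm (E : Set (RN N)) (φ : RN N → ℝ) : ℝ :=
  Real.sqrt (∫ x, φ x ^ 2 ∂ sμ N E)

/-- `W^{2,p}(∂E)` norm (via tangential derivatives) -/
def w2pNorm (p : ℝ) (E : Set (RN N)) (φ : RN N → ℝ) : ℝ :=
  (∫ x, (|φ x| ^ p + ‖tgrad N E φ x‖ ^ p +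
    (∑ j, ‖tgrad N E (fun y => tgrad N E φ y j) x‖ ^ 2) ^ (p / 2)) ∂ sμ N E) ^ (1 / p)

/-- the normal graph `{x + ψ(x) ν(x) : x ∈ ∂E}` -/
def graphOver (E : Set (RN N)) (ψ : RN N → ℝ) : Set (RN N) :=
  (fun x => x + ψ x • nv N E x) '' frontier E

end

/-!
The set `E` is calibrated. Near `∂E` the signed distance `d` is `C²` with nonvanishing gradient,
so `X_E = ψ(d) ∇d / |∇d|`, with `ψ` a bump equal to `1` near `0`, is an admissible `C¹`
periodic field with `|X_E| ≤ 1`. For any admissible `X`, approximating `χ_E` by `s_ε ∘ d` with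
`s_ε` smooth and nonincreasing, integration by parts gives
`∫ s_ε(d) div X = -∫ s_ε'(d) ⟨∇d, X⟩ ≤ -∫ s_ε'(d) |∇d| = ∫ s_ε(d) div X_E`,
and letting `ε → 0` (`∂E` is Lebesgue-null) yields `∫_E div X ≤ ∫_E div X_E`, i.e.
`P(E) = ∫_E div X_E`.
Testing `P(F)` with the same field,
`P(F) ≥ ∫_F div X_E ≥ ∫_E div X_E - ‖div X_E‖_∞ |E Δ F| = P(E) - C |E Δ F|`.
-/

variable {N : ℕ}

lemma eV_apply (i j : Fin N) : eV N i j = if j = i then 1 else 0 := by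
  simp [eV]

lemma intVec_apply (z : Fin N → ℤ) (i : Fin N) : intVec N z i = z i := by
  simp [intVec, eV_apply]

lemma eV_eq_intVec (i : Fin N) : eV N i = intVec N (Pi.single i 1) := by
  ext j
  rw [intVec_apply, eV_apply, Pi.single_apply]
  split_ifs <;> simp

lemma measurableSet_Qcube : MeasurableSet (Qcube N) := by
  have : Qcube N = ⋂ i, (fun x : RN N => x i) ⁻¹' Ico 0 1 := by ext; simp [Qcube]
  exact this ▸ MeasurableSet.iInter fun i => measurableSet_Ico.preimage (by fun_prop)

lemma isCompact_closedCube : IsCompact {x : RN N | ∀ i, x i ∈ Icc (0 : ℝ) 1} := by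
  have : {x : RN N | ∀ i, x i ∈ Icc (0 : ℝ) 1} =
      WithLp.toLp 2 '' univ.pi fun _ => Icc 0 1 := by
    ext x
    refine ⟨fun hx => ⟨x.ofLp, fun i _ => hx i, rfl⟩, ?_⟩
    rintro ⟨y, hy, rfl⟩ i
    exact hy i trivial
  exact this ▸ (isCompact_univ_pi fun _ => isCompact_Icc).image (PiLp.continuous_toLp 2 _)

lemma Qcube_subset_closedCube : Qcube N ⊆ {x : RN N | ∀ i, x i ∈ Icc (0 : ℝ) 1} :=
  fun _ hx i => Ico_subset_Icc_self (hx i)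

lemma exists_add_intVec_mem_closedCube (x : RN N) :
    ∃ z : Fin N → ℤ, ∀ i, (x + intVec N z) i ∈ Icc (0 : ℝ) 1 := by
  refine ⟨fun i => -⌊x i⌋, fun i => ?_⟩
  simp only [PiLp.add_apply, intVec_apply, Int.cast_neg, ← sub_eq_add_neg]
  exact ⟨sub_nonneg.2 (Int.floor_le _), by linarith [Int.lt_floor_add_one (x i)]⟩

lemma intVec_neg (z : Fin N → ℤ) : intVec N (-z) = -intVec N z := by
  ext i
  simp [intVec_apply]

lemma PerSet.add_mem_iff {E : Set (RN N)} (hper : PerSet N E) (z : Fin N → ℤ) (x : RN N) :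
    x + intVec N z ∈ E ↔ x ∈ E :=
  Set.ext_iff.1 (hper z) x

lemma PerSet.image_add {E : Set (RN N)} (hper : PerSet N E) (z : Fin N → ℤ) :
    (fun x => x + intVec N z) '' E = E := by
  rw [Set.image_add_right, ← intVec_neg, hper]

lemma PerSet.frontier {E : Set (RN N)} (hper : PerSet N E) : PerSet N (frontier E) := fun z => by
  have := (Homeomorph.addRight (intVec N z)).preimage_frontier E
  rwa [Homeomorph.coe_addRight, hper z] at this

lemma PerFun.fderiv_eq {F : Type*} [NormedAddCommGroup F] [NormedSpace ℝ F] {f : RN N → F}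
    (hp : PerFun N f) (z : Fin N → ℤ) (x : RN N) :
    fderiv ℝ f (x + intVec N z) = fderiv ℝ f x := by
  rw [← fderiv_comp_add_right]
  exact congrArg (fderiv ℝ · x) (funext fun y => hp z y)

lemma PerFun.gradient_eq {f : RN N → ℝ} (hp : PerFun N f) (z : Fin N → ℤ) (x : RN N) :
    gradient f (x + intVec N z) = gradient f x := by
  simp only [gradient, hp.fderiv_eq]

lemma PerFun.contDiffAt_of_add {F : Type*} [NormedAddCommGroup F] [NormedSpace ℝ F]
    {f : RN N → F} (hp : PerFun N f) {z : Fin N → ℤ} {x : RN N} {k : WithTop ℕ∞} (h : ContDiffAt ℝ k f (x + intVec N z)) : ContDiffAt ℝ k f x := by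
  have hcomp : (fun y => f (y + intVec N z)) = f := funext fun y => hp z y
  exact hcomp ▸ h.comp x (contDiffAt_id.add contDiffAt_const)

lemma PerFun.comp {α β : Type*} {f : RN N → α} (hf : PerFun N f) (g : α → β) :
    PerFun N (g ∘ f) :=
  fun z x => congrArg g (hf z x)

lemma exists_bound_on_Qcube {f : RN N → ℝ} (hf : Continuous f) :
    ∃ C, 0 < C ∧ ∀ x ∈ Qcube N, |f x| ≤ C := by
  obtain ⟨C, hC⟩ := isCompact_closedCube.exists_bound_of_continuousOn hf.continuousOn
  exact ⟨max C 1, by positivity, fun x hx =>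
    (hC x (Qcube_subset_closedCube hx)).trans (le_max_left _ _)⟩

lemma volume_Qcube_ne_top : volume (Qcube N) ≠ ⊤ :=
  (measure_mono Qcube_subset_closedCube).trans_lt isCompact_closedCube.measure_lt_top |>.ne

lemma integrableOn_Qcube {f : RN N → ℝ} (hf : Continuous f) : IntegrableOn f (Qcube N) :=
  (hf.continuousOn.integrableOn_compact isCompact_closedCube).mono_set Qcube_subset_closedCube

lemma hasDerivAt_comp_add_smul {E F : Type*} [NormedAddCommGroup E] [NormedSpace ℝ E]
    [NormedAddCommGroup F] [NormedSpace ℝ F] {f : E → F} {c v : E} {t : ℝ}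
    (hf : DifferentiableAt ℝ f (c + t • v)) :
    HasDerivAt (fun s : ℝ => f (c + s • v)) (fderiv ℝ f (c + t • v) v) t := by
  have hline : HasDerivAt (fun s : ℝ => c + s • v) v t := by
    simpa using ((hasDerivAt_id t).smul_const v).const_add c
  exact hf.hasFDerivAt.comp_hasDerivAt t hline

lemma injOn_of_hasDerivAt_ne_zero {I : Set ℝ} (hI : Convex ℝ I) {f f' : ℝ → ℝ}
    (hf : ∀ t ∈ I, HasDerivAt f (f' t) t) (hf' : ∀ t ∈ I, f' t ≠ 0) : InjOn f I := by
  have hc : ContinuousOn f I := fun t ht => (hf t ht).continuousAt.continuousWithinAt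
  have hderiv : ∀ t ∈ interior I, deriv f t = f' t :=
    fun t ht => (hf t (interior_subset ht)).deriv
  rcases hasDerivWithinAt_forall_lt_or_forall_gt_of_forall_ne hI
    (fun t ht => (hf t ht).hasDerivWithinAt) hf' with hneg | hpos
  · exact (strictAntiOn_of_deriv_neg hI hc fun t ht =>
      hderiv t ht ▸ hneg t (interior_subset ht)).injOn
  · exact (strictMonoOn_of_deriv_pos hI hc fun t ht =>
      hderiv t ht ▸ hpos t (interior_subset ht)).injOn

section LineCoords

variable {n : ℕ}

/-- The `i`-th coordinate is moved last, so that Fubini integrates along lines parallel to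
`eV (n + 1) i` first. -/
def lineCoords (i : Fin (n + 1)) : RN (n + 1) ≃ᵐ (Fin n → ℝ) × ℝ :=
  ((MeasurableEquiv.toLp 2 (Fin (n + 1) → ℝ)).symm.trans
    (MeasurableEquiv.piFinSuccAbove (fun _ => ℝ) i)).trans MeasurableEquiv.prodComm

lemma measurePreserving_lineCoords (i : Fin (n + 1)) :
    MeasurePreserving (lineCoords i) volume volume := by
  have hsplit : MeasurePreserving (MeasurableEquiv.piFinSuccAbove (fun _ => ℝ) i) volume
      (volume.prod volume) := by
    rw [volume_pi, volume_pi]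
    exact measurePreserving_piFinSuccAbove (fun _ => volume) i
  exact Measure.measurePreserving_swap.comp (hsplit.comp
    (EuclideanSpace.volume_preserving_symm_measurableEquiv_toLp (Fin (n + 1))))

lemma lineCoords_symm_apply (i : Fin (n + 1)) (y : Fin n → ℝ) (t : ℝ) :
    (lineCoords i).symm (y, t) = WithLp.toLp 2 (i.insertNth t y) :=
  rfl

lemma lineCoords_symm_eq_add_smul (i : Fin (n + 1)) (y : Fin n → ℝ) (t : ℝ) :
    (lineCoords i).symm (y, t) = (lineCoords i).symm (y, 0) + t • eV (n + 1) i := by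
  ext k
  simp only [lineCoords_symm_apply, PiLp.add_apply, PiLp.smul_apply, eV_apply, smul_eq_mul]
  refine Fin.succAboveCases i ?_ (fun j => ?_) k
  · simp
  · simp [Fin.succAbove_ne i j]

lemma lineCoords_symm_mem_Qcube (i : Fin (n + 1)) (y : Fin n → ℝ) (t : ℝ) :
    (lineCoords i).symm (y, t) ∈ Qcube (n + 1) ↔
      y ∈ univ.pi (fun _ => Ico (0 : ℝ) 1) ∧ t ∈ Ico (0 : ℝ) 1 := by
  simp [Qcube, lineCoords_symm_apply, Fin.forall_iff_succAbove i, and_comm]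

end LineCoords

lemma integral_Ico_fderiv_eq_zero {f : RN N → ℝ} (hf : ContDiff ℝ 1 f) (hp : PerFun N f)
    (c : RN N) (i : Fin N) :
    ∫ t in Ico (0 : ℝ) 1, fderiv ℝ f (c + t • eV N i) (eV N i) = 0 := by
  have hderiv : ∀ t : ℝ, HasDerivAt (fun s : ℝ => f (c + s • eV N i))
      (fderiv ℝ f (c + t • eV N i) (eV N i)) t :=
    fun t => hasDerivAt_comp_add_smul (hf.differentiable one_ne_zero _)
  have hcont : Continuous fun t : ℝ => fderiv ℝ f (c + t • eV N i) (eV N i) := by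
    have := hf.continuous_fderiv one_ne_zero
    fun_prop
  rw [setIntegral_congr_set Ico_ae_eq_Ioc, ← intervalIntegral.integral_of_le zero_le_one,
    intervalIntegral.integral_eq_sub_of_hasDerivAt (fun t _ => hderiv t)
      (hcont.intervalIntegrable 0 1), one_smul, zero_smul, add_zero, eV_eq_intVec, hp, sub_self]

lemma integral_fderiv_eV_eq_zero {f : RN N → ℝ} (hf : ContDiff ℝ 1 f) (hp : PerFun N f)
    (i : Fin N) : ∫ x in Qcube N, fderiv ℝ f x (eV N i) = 0 := by
  obtain ⟨n, rfl⟩ : ∃ n, N = n + 1 := ⟨N - 1, (Nat.succ_pred_eq_of_pos i.pos).symm⟩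
  set φ : RN (n + 1) → ℝ := fun x => fderiv ℝ f x (eV (n + 1) i)
  have hφ : Continuous φ := by
    have := hf.continuous_fderiv one_ne_zero
    fun_prop
  set L := lineCoords i
  have hL : MeasurePreserving L.symm volume volume := (measurePreserving_lineCoords i).symm L
  have hpre :
      L.symm ⁻¹' Qcube (n + 1) = univ.pi (fun _ => Ico (0 : ℝ) 1) ×ˢ Ico (0 : ℝ) 1 := by
    ext ⟨y, t⟩
    exact lineCoords_symm_mem_Qcube i y t
  have hint : IntegrableOn (φ ∘ L.symm) (L.symm ⁻¹' Qcube (n + 1)) :=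
    (hL.integrableOn_comp_preimage L.symm.measurableEmbedding).2 (integrableOn_Qcube hφ)
  rw [← hL.setIntegral_preimage_emb L.symm.measurableEmbedding φ, hpre, Measure.volume_eq_prod,
    setIntegral_prod (fun p => φ (L.symm p)) (hpre ▸ hint)]
  have hline : ∀ y, ∫ t in Ico (0 : ℝ) 1, φ (L.symm (y, t)) = 0 := fun y => by
    have hy : ∀ t, φ (L.symm (y, t)) =
        fderiv ℝ f (L.symm (y, 0) + t • eV (n + 1) i) (eV (n + 1) i) :=
      fun t => by rw [← lineCoords_symm_eq_add_smul]
    simp only [hy]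
    exact integral_Ico_fderiv_eq_zero hf hp _ i
  simp only [hline, integral_zero]

lemma volume_zeroSet_eq_zero_of_fderiv_ne_zero {g : RN N → ℝ} (hg : Continuous g)
    {U : Set (RN N)} (hU : IsOpen U) (hUc : Convex ℝ U) (i : Fin N)
    (hd : ∀ x ∈ U, DifferentiableAt ℝ g x) (hi : ∀ x ∈ U, fderiv ℝ g x (eV N i) ≠ 0) :
    volume (U ∩ g ⁻¹' {0}) = 0 := by
  obtain ⟨n, rfl⟩ : ∃ n, N = n + 1 := ⟨N - 1, (Nat.succ_pred_eq_of_pos i.pos).symm⟩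
  set L := lineCoords i
  have hA : MeasurableSet (U ∩ g ⁻¹' {0}) :=
    hU.measurableSet.inter (hg.measurable (measurableSet_singleton 0))
  rw [← ((measurePreserving_lineCoords i).symm L).measure_preimage hA.nullMeasurableSet,
    Measure.volume_eq_prod, Measure.prod_apply (L.symm.measurable hA)]
  refine (lintegral_congr fun y => Subsingleton.measure_zero ?_ _).trans lintegral_zero
  set c := L.symm (y, 0)
  have hslice : Prod.mk y ⁻¹' (L.symm ⁻¹' (U ∩ g ⁻¹' {0})) =
      {t | c + t • eV (n + 1) i ∈ U} ∩ (fun t => g (c + t • eV (n + 1) i)) ⁻¹' {0} := by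
    ext t
    simp only [mem_preimage, L, lineCoords_symm_eq_add_smul i y t, mem_inter_iff]
    rfl
  have hI : Convex ℝ {t : ℝ | c + t • eV (n + 1) i ∈ U} := by
    have : {t : ℝ | c + t • eV (n + 1) i ∈ U} =
        AffineMap.lineMap c (c + eV (n + 1) i) ⁻¹' U := by
      ext t
      simp [AffineMap.lineMap_apply, add_comm]
    exact this ▸ hUc.affine_preimage _
  have hinj : InjOn (fun t => g (c + t • eV (n + 1) i)) {t | c + t • eV (n + 1) i ∈ U} :=
    injOn_of_hasDerivAt_ne_zero hI (fun t ht => hasDerivAt_comp_add_smul (hd _ ht))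
      (fun t ht => hi _ ht)
  rw [hslice]
  rintro s ⟨hsU, hs⟩ t ⟨htU, ht⟩
  exact hinj hsU htU (hs.trans ht.symm)

lemma continuous_divg {X : RN N → RN N} (hX : ContDiff ℝ 1 X) : Continuous (divg N X) := by
  have := hX.continuous_fderiv one_ne_zero
  unfold divg
  fun_prop

lemma continuous_fderiv_apply {u : RN N → ℝ} {X : RN N → RN N} (hu : ContDiff ℝ 1 u)
    (hX : Continuous X) : Continuous fun x => fderiv ℝ u x (X x) :=
  isBoundedBilinearMap_apply.continuous.comp ((hu.continuous_fderiv one_ne_zero).prodMk hX)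

lemma integral_divg_eq_zero {Y : RN N → RN N} (hY : ContDiff ℝ 1 Y) (hp : PerFun N Y) :
    ∫ x in Qcube N, divg N Y x = 0 := by
  have hcoord : ∀ i x,
      fderiv ℝ Y x (eV N i) i = fderiv ℝ (EuclideanSpace.proj i ∘ Y) x (eV N i) :=
    fun i x => by
      rw [((EuclideanSpace.proj i).hasFDerivAt.comp x
        (hY.differentiable one_ne_zero x).hasFDerivAt).fderiv]
      rfl
  have hint : ∀ i, IntegrableOn (fun x => fderiv ℝ Y x (eV N i) i) (Qcube N) := fun i =>
    integrableOn_Qcube (by have := hY.continuous_fderiv one_ne_zero; fun_prop)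
  unfold divg
  rw [integral_finsetSum _ fun i _ => hint i]
  refine Finset.sum_eq_zero fun i _ => ?_
  simp only [hcoord]
  exact integral_fderiv_eV_eq_zero ((EuclideanSpace.proj i).contDiff.comp hY) (hp.comp _) i

lemma divg_smul {u : RN N → ℝ} {X : RN N → RN N} {x : RN N} (hu : DifferentiableAt ℝ u x)
    (hX : DifferentiableAt ℝ X x) :
    divg N (fun y => u y • X y) x = u x * divg N X x + fderiv ℝ u x (X x) := by
  have hX_eq : X x = ∑ i, X x i • eV N i := by
    simpa [EuclideanSpace.basisFun_apply, eV] using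
      ((EuclideanSpace.basisFun (Fin N) ℝ).sum_repr (X x)).symm
  unfold divg
  rw [(hu.hasFDerivAt.fun_smul hX.hasFDerivAt).fderiv, Finset.mul_sum]
  conv_rhs => rw [hX_eq, map_sum, ← Finset.sum_add_distrib]
  refine Finset.sum_congr rfl fun i _ => ?_
  simp [mul_comm]

lemma integral_mul_divg {u : RN N → ℝ} {X : RN N → RN N} (hu : ContDiff ℝ 1 u)
    (hX : ContDiff ℝ 1 X) (hpu : PerFun N u) (hpX : PerFun N X) :
    ∫ x in Qcube N, u x * divg N X x = -∫ x in Qcube N, fderiv ℝ u x (X x) := by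
  have hprod : PerFun N fun y => u y • X y := fun z x => by simp only [hpu z x, hpX z x]
  have h0 := integral_divg_eq_zero (Y := fun y => u y • X y) (hu.smul hX) hprod
  have hsplit : ∀ x, divg N (fun y => u y • X y) x = u x * divg N X x + fderiv ℝ u x (X x) :=
    fun x => divg_smul (hu.differentiable one_ne_zero x) (hX.differentiable one_ne_zero x)
  simp only [hsplit] at h0
  rw [integral_add (f := fun x => u x * divg N X x)
    (integrableOn_Qcube (hu.continuous.mul (continuous_divg hX)))
    (integrableOn_Qcube (continuous_fderiv_apply hu hX.continuous))] at h0
  linarith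

/-- The vector fields over which the supremum defining `tper` is taken. -/
def IsTestField (N : ℕ) (X : RN N → RN N) : Prop :=
  ContDiff ℝ 1 X ∧ PerFun N X ∧ ∀ x, ‖X x‖ ≤ 1

lemma IsTestField.ofReal_integral_le_tper {X : RN N → RN N} (hX : IsTestField N X)
    (F : Set (RN N)) : ENNReal.ofReal (∫ x in F ∩ Qcube N, divg N X x) ≤ tper N F :=
  le_iSup (fun X : {X // IsTestField N X} => ENNReal.ofReal (∫ x in F ∩ Qcube N, divg N X.1 x))
    ⟨X, hX⟩

def IsCalibration (N : ℕ) (E : Set (RN N)) (XE : RN N → RN N) : Prop :=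
  IsTestField N XE ∧
    ∀ X, IsTestField N X →
      ∫ x in E ∩ Qcube N, divg N X x ≤ ∫ x in E ∩ Qcube N, divg N XE x

lemma IsCalibration.tper_eq {E : Set (RN N)} {XE : RN N → RN N} (h : IsCalibration N E XE) :
    tper N E = ENNReal.ofReal (∫ x in E ∩ Qcube N, divg N XE x) :=
  le_antisymm (iSup_le fun X => ENNReal.ofReal_le_ofReal (h.2 X.1 X.2))
    (h.1.ofReal_integral_le_tper E)

lemma isCalibration_zero_of_frontier_eq_empty {E : Set (RN N)} (hfr : frontier E = ∅) :
    IsCalibration N E 0 := by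
  have hdivg : divg N (0 : RN N → RN N) = 0 := by
    ext x
    simp [divg, show fderiv ℝ (0 : RN N → RN N) x = 0 from fderiv_const_apply 0]
  refine ⟨⟨contDiff_const, fun _ _ => rfl, fun _ => by simp⟩, fun X hX => ?_⟩
  rw [hdivg, Pi.zero_def, integral_zero]
  rcases isClopen_iff.1 (isClopen_iff_frontier_eq_empty.2 hfr) with rfl | rfl
  · simp
  · rw [univ_inter, integral_divg_eq_zero hX.1 hX.2.1]

lemma perFun_sd {E : Set (RN N)} (hper : PerSet N E) : PerFun N (sd N E) := by
  intro z x
  have hdist : infDist (x + intVec N z) (frontier E) = infDist x (frontier E) := by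
    conv_lhs => rw [← hper.frontier.image_add z]
    exact infDist_image (isometry_add_right _)
  by_cases hx : x ∈ E
  · simp [sd, hx, (hper.add_mem_iff z x).2 hx, hdist]
  · simp [sd, hx, mt (hper.add_mem_iff z x).1 hx, hdist]

lemma abs_sd (E : Set (RN N)) (x : RN N) : |sd N E x| = infDist x (frontier E) := by
  unfold sd
  split_ifs <;> simp [infDist_nonneg]

lemma sd_eq_zero_of_mem_frontier {E : Set (RN N)} {x : RN N} (hx : x ∈ frontier E) :
    sd N E x = 0 :=
  abs_eq_zero.1 ((abs_sd E x).trans (infDist_zero_of_mem hx))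

lemma continuous_sd (E : Set (RN N)) : Continuous (sd N E) := by
  classical
  refine Continuous.if (fun x hx => ?_) (continuous_infDist_pt _).neg (continuous_infDist_pt _)
  rw [infDist_zero_of_mem (s := frontier E) hx, neg_zero]

lemma sd_nonpos_iff {E : Set (RN N)} (hfr : (frontier E).Nonempty) (x : RN N) :
    sd N E x ≤ 0 ↔ x ∈ closure E := by
  rw [closure_eq_self_union_frontier]
  by_cases hx : x ∈ E
  · simp [sd, hx, infDist_nonneg]
  · simp only [sd, hx, if_false, false_or, mem_union]
    rw [isClosed_frontier.mem_iff_infDist_zero hfr]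
    exact ⟨fun h => le_antisymm h infDist_nonneg, le_of_eq⟩

lemma exists_apply_eV_ne_zero {L : RN N →L[ℝ] ℝ} (hL : L ≠ 0) :
    ∃ i, L (eV N i) ≠ 0 := by
  by_contra! h
  exact hL (ContinuousLinearMap.coe_injective
    ((EuclideanSpace.basisFun (Fin N) ℝ).toBasis.ext fun i => by simpa [eV] using h i))

lemma gradient_ne_zero_iff {f : RN N → ℝ} {x : RN N} :
    gradient f x ≠ 0 ↔ fderiv ℝ f x ≠ 0 := by
  simp [gradient]

lemma volume_frontier_eq_zero {E : Set (RN N)} {k : ℕ∞} (hk : 1 ≤ k)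
    (hsm : SmoothBdry N k E) :
    volume (frontier E) = 0 := by
  obtain ⟨U, hU, hEU, hsd, hgrad⟩ := hsm
  have hk' : (1 : WithTop ℕ∞) ≤ k := by exact_mod_cast hk
  have hdiff : ∀ x ∈ U, DifferentiableAt ℝ (sd N E) x :=
    fun x hx => (hsd.differentiableOn (one_pos.trans_le hk').ne').differentiableAt (hU.mem_nhds hx)
  have hfd : ContinuousOn (fderiv ℝ (sd N E)) U := hsd.continuousOn_fderiv_of_isOpen hU hk'
  refine measure_null_of_locally_null _ fun y hy => ?_
  obtain ⟨i, hi⟩ := exists_apply_eV_ne_zero (gradient_ne_zero_iff.1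
    (norm_ne_zero_iff.1 ((hgrad y hy).symm ▸ one_ne_zero)))
  have hV : IsOpen (U ∩ (fun x => fderiv ℝ (sd N E) x (eV N i)) ⁻¹' {0}ᶜ) :=
    ((ContinuousLinearMap.apply ℝ ℝ (eV N i)).continuous.comp_continuousOn
      hfd).isOpen_inter_preimage hU isOpen_compl_singleton
  obtain ⟨ρ, hρ, hball⟩ := Metric.isOpen_iff.1 hV y ⟨hEU hy, hi⟩
  refine ⟨frontier E ∩ ball y ρ, inter_mem_nhdsWithin _ (ball_mem_nhds y hρ), ?_⟩
  refine measure_mono_null (t := ball y ρ ∩ sd N E ⁻¹' {0})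
    (fun x hx => ⟨hx.2, sd_eq_zero_of_mem_frontier hx.1⟩) ?_
  exact volume_zeroSet_eq_zero_of_fderiv_ne_zero (continuous_sd E) isOpen_ball
    (convex_ball y ρ) i (fun x hx => hdiff x (hball hx).1) (fun x hx => (hball hx).2)

lemma exists_thickening_forall_of_perSet {K : Set (RN N)} (hK : IsClosed K) (hKper : PerSet N K)
    {P : RN N → Prop} (hP : ∀ z x, P (x + intVec N z) → P x)
    (hloc : ∀ y ∈ K, ∀ᶠ x in 𝓝 y, P x) :
    ∃ δ, 0 < δ ∧ ∀ x ∈ thickening δ K, P x := by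
  have hcpt : IsCompact (K ∩ {x : RN N | ∀ i, x i ∈ Icc (0 : ℝ) 1}) :=
    isCompact_closedCube.inter_left hK
  obtain ⟨δ, hδ, hsub⟩ := hcpt.exists_thickening_subset_open isOpen_interior
    fun y hy => mem_interior_iff_mem_nhds.2 (hloc y hy.1)
  refine ⟨δ, hδ, fun x hx => ?_⟩
  obtain ⟨y, hyK, hxy⟩ := mem_thickening_iff.1 hx
  obtain ⟨z, hz⟩ := exists_add_intVec_mem_closedCube y
  refine hP z x (interior_subset (hsub (mem_thickening_iff.2 ⟨y + intVec N z, ?_, ?_⟩)))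
  · exact mem_inter ((hKper.add_mem_iff z y).2 hyK) hz
  · rwa [dist_add_right]

lemma exists_tube {E : Set (RN N)} (hper : PerSet N E) {k : ℕ∞} (hk : 1 ≤ k)
    (hsm : SmoothBdry N k E) (hfr : (frontier E).Nonempty) :
    ∃ δ, 0 < δ ∧
      ∀ x, |sd N E x| < δ → ContDiffAt ℝ k (sd N E) x ∧ gradient (sd N E) x ≠ 0 := by
  obtain ⟨U, hU, hEU, hsd, hgrad⟩ := hsm
  have hk' : (1 : WithTop ℕ∞) ≤ k := by exact_mod_cast hk
  have hP : ∀ (z : Fin N → ℤ) x, ContDiffAt ℝ k (sd N E) (x + intVec N z) ∧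
      gradient (sd N E) (x + intVec N z) ≠ 0 →
      ContDiffAt ℝ k (sd N E) x ∧ gradient (sd N E) x ≠ 0 := fun z x h =>
    ⟨(perFun_sd hper).contDiffAt_of_add h.1, (perFun_sd hper).gradient_eq z x ▸ h.2⟩
  have hloc : ∀ y ∈ frontier E, ∀ᶠ x in 𝓝 y,
      ContDiffAt ℝ k (sd N E) x ∧ gradient (sd N E) x ≠ 0 := by
    intro y hy
    have hcont : ContinuousAt (gradient (sd N E)) y :=
      (InnerProductSpace.toDual ℝ (RN N)).symm.continuous.continuousAt.comp
        ((hsd.continuousOn_fderiv_of_isOpen hU hk').continuousAt (hU.mem_nhds (hEU hy)))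
    filter_upwards [hU.mem_nhds (hEU hy),
      hcont.eventually_ne (norm_ne_zero_iff.1 ((hgrad y hy).symm ▸ one_ne_zero))] with x hxU hx
    exact ⟨hsd.contDiffAt (hU.mem_nhds hxU), hx⟩
  obtain ⟨δ, hδ, htube⟩ :=
    exists_thickening_forall_of_perSet isClosed_frontier hper.frontier hP hloc
  refine ⟨δ, hδ, fun x hx => htube x ?_⟩
  rwa [mem_thickening_iff_infDist_lt hfr, ← abs_sd]

noncomputable def smoothStep (ε t : ℝ) : ℝ := Real.smoothTransition ((ε - t) / ε)

section SmoothStep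

variable {ε t : ℝ}

lemma contDiff_smoothStep {n : ℕ∞} : ContDiff ℝ n (smoothStep ε) :=
  Real.smoothTransition.contDiff.comp (by fun_prop)

lemma smoothStep_of_nonpos (hε : 0 < ε) (ht : t ≤ 0) : smoothStep ε t = 1 :=
  Real.smoothTransition.one_of_one_le ((le_div_iff₀ hε).2 (by linarith))

lemma smoothStep_of_le (hε : 0 < ε) (ht : ε ≤ t) : smoothStep ε t = 0 :=
  Real.smoothTransition.zero_of_nonpos (div_nonpos_of_nonpos_of_nonneg (by linarith) hε.le)

lemma abs_smoothStep_le_one : |smoothStep ε t| ≤ 1 :=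
  abs_le.2 ⟨neg_one_lt_zero.le.trans (Real.smoothTransition.nonneg _),
    Real.smoothTransition.le_one _⟩

lemma antitone_smoothStep (hε : 0 < ε) : Antitone (smoothStep ε) := fun _ _ h =>
  Real.smoothTransition.monotone (div_le_div_of_nonneg_right (by linarith) hε.le)

end SmoothStep

lemma tendsto_smoothStep {ε : ℕ → ℝ} (hpos : ∀ n, 0 < ε n)
    (hlim : Tendsto ε atTop (𝓝 0)) (t : ℝ) :
    Tendsto (fun n => smoothStep (ε n) t) atTop (𝓝 ((Iic 0).indicator 1 t)) := by
  by_cases ht : t ≤ 0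
  · simp only [smoothStep_of_nonpos (hpos _) ht, indicator_of_mem (mem_Iic.2 ht), Pi.one_apply]
    exact tendsto_const_nhds
  · rw [indicator_of_notMem (by simpa using ht)]
    refine tendsto_const_nhds.congr' ?_
    filter_upwards [hlim.eventually (gt_mem_nhds (not_le.1 ht))] with n hn
    exact (smoothStep_of_le (hpos n) hn.le).symm

noncomputable def calibField (φ : ContDiffBump (0 : ℝ)) (E : Set (RN N)) (x : RN N) : RN N :=
  φ (sd N E x) • ‖gradient (sd N E) x‖⁻¹ • gradient (sd N E) x

lemma fderiv_apply_le_norm_gradient (f : RN N → ℝ) (x : RN N) {v : RN N} (hv : ‖v‖ ≤ 1) :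
    fderiv ℝ f x v ≤ ‖gradient f x‖ := by
  rw [← InnerProductSpace.toDual_symm_apply (𝕜 := ℝ)]
  exact (real_inner_le_norm _ _).trans (mul_le_of_le_one_right (norm_nonneg _) hv)

section Calibration

variable {E : Set (RN N)} (φ : ContDiffBump (0 : ℝ))

lemma perFun_calibField (hper : PerSet N E) : PerFun N (calibField φ E) := fun z x => by
  simp only [calibField, perFun_sd hper z x, (perFun_sd hper).gradient_eq z x]

lemma norm_calibField_le_one (x : RN N) : ‖calibField φ E x‖ ≤ 1 := by
  rcases eq_or_ne (gradient (sd N E) x) 0 with h | h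
  · simp [calibField, h]
  · rw [calibField, norm_smul, norm_smul, norm_inv, norm_norm,
      inv_mul_cancel₀ (norm_ne_zero_iff.2 h), mul_one, Real.norm_of_nonneg φ.nonneg]
    exact φ.le_one

lemma fderiv_sd_calibField {x : RN N} (hx : |sd N E x| ≤ φ.rIn) :
    fderiv ℝ (sd N E) x (calibField φ E x) = ‖gradient (sd N E) x‖ := by
  have hφ : φ (sd N E x) = 1 := φ.one_of_mem_closedBall (by simpa using hx)
  rw [calibField, hφ, one_smul, ← InnerProductSpace.toDual_symm_apply (𝕜 := ℝ)]
  change ⟪gradient (sd N E) x, _⟫ = _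
  rw [real_inner_smul_right, real_inner_self_eq_norm_sq]
  rcases eq_or_ne ‖gradient (sd N E) x‖ 0 with h | h
  · simp [h]
  · field_simp

lemma eventuallyEq_smoothStep_sd {ε : ℝ} (hε : 0 < ε) {x : RN N}
    (hx : sd N E x < 0 ∨ ε < sd N E x) :
    (fun y => smoothStep ε (sd N E y)) =ᶠ[𝓝 x] fun _ => smoothStep ε (sd N E x) := by
  rcases hx with hx | hx
  · filter_upwards [(continuous_sd E).continuousAt.eventually_lt continuousAt_const hx] with y hy
    rw [smoothStep_of_nonpos hε hy.le, smoothStep_of_nonpos hε hx.le]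
  · filter_upwards [(continuous_sd E).continuousAt.eventually_const_lt hx] with y hy
    rw [smoothStep_of_le hε hy.le, smoothStep_of_le hε hx.le]

lemma tendsto_integral_smoothStep_sd_mul (hfr : (frontier E).Nonempty)
    (hnull : volume (frontier E) = 0) {Z : RN N → RN N} (hZ : ContDiff ℝ 1 Z) {ε : ℕ → ℝ}
    (hpos : ∀ n, 0 < ε n) (hlim : Tendsto ε atTop (𝓝 0)) :
    Tendsto (fun n => ∫ x in Qcube N, smoothStep (ε n) (sd N E x) * divg N Z x) atTop
      (𝓝 (∫ x in E ∩ Qcube N, divg N Z x)) := by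
  have hZc := continuous_divg hZ
  have hclosure : ∫ x in Qcube N, (closure E).indicator (divg N Z) x =
      ∫ x in E ∩ Qcube N, divg N Z x := by
    rw [setIntegral_indicator isClosed_closure.measurableSet, inter_comm]
    exact setIntegral_congr_set ((closure_ae_eq_of_null_frontier hnull).inter (ae_eq_refl _))
  rw [← hclosure]
  refine tendsto_integral_of_dominated_convergence (fun x => |divg N Z x|)
    (fun n => (((contDiff_smoothStep (n := 0)).continuous.comp (continuous_sd E)).mul
      hZc).aestronglyMeasurable)
    (integrableOn_Qcube hZc.abs) (fun n => ae_of_all _ fun x => ?_) (ae_of_all _ fun x => ?_)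
  · rw [Real.norm_eq_abs, abs_mul]
    exact mul_le_of_le_one_left (abs_nonneg _) abs_smoothStep_le_one
  · convert (tendsto_smoothStep hpos hlim (sd N E x)).mul_const (divg N Z x) using 2
    by_cases hx : x ∈ closure E
    · simp [hx, (sd_nonpos_iff hfr x).2 hx]
    · simp [hx, mt (sd_nonpos_iff hfr x).1 hx]

variable {δ : ℝ}
  (htube : ∀ x, |sd N E x| < δ → ContDiffAt ℝ 2 (sd N E) x ∧ gradient (sd N E) x ≠ 0)
include htube

lemma contDiff_calibField (hφ : φ.rOut < δ) : ContDiff ℝ 1 (calibField φ E) := by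
  refine contDiff_iff_contDiffAt.2 fun x => ?_
  by_cases hx : |sd N E x| < δ
  · obtain ⟨hsd, hgrad⟩ := htube x hx
    have hg : ContDiffAt ℝ 1 (gradient (sd N E)) x :=
      (InnerProductSpace.toDual ℝ (RN N)).symm.contDiff.contDiffAt.comp x
        (hsd.fderiv_right le_rfl)
    exact ((φ.contDiff.contDiffAt.comp x (hsd.of_le one_le_two)).smul
      ((hg.norm ℝ hgrad).inv (norm_ne_zero_iff.2 hgrad) |>.smul hg))
  · have hev : ∀ᶠ y in 𝓝 x, φ.rOut < |sd N E y| :=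
      (continuous_sd E).abs.continuousAt.eventually_const_lt (by linarith)
    refine contDiffAt_const (c := (0 : RN N)).congr_of_eventuallyEq ?_
    filter_upwards [hev] with y hy
    rw [calibField, φ.zero_of_le_dist (by simpa using hy.le), zero_smul]

lemma contDiff_smoothStep_sd {ε : ℝ} (hε : 0 < ε) (hεδ : ε < δ) :
    ContDiff ℝ 1 fun x => smoothStep ε (sd N E x) := by
  refine contDiff_iff_contDiffAt.2 fun x => ?_
  by_cases hx : |sd N E x| < δ
  · exact contDiff_smoothStep.contDiffAt.comp x ((htube x hx).1.of_le one_le_two)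
  · refine contDiffAt_const.congr_of_eventuallyEq (eventuallyEq_smoothStep_sd hε ?_)
    rcases le_abs'.1 (not_lt.1 hx) with h | h
    · exact Or.inl (by linarith)
    · exact Or.inr (by linarith)

/-- `∇ (smoothStep ε ∘ sd)` is a nonpositive multiple of `∇ sd`, and where it is nonzero
`calibField φ E = ∇ sd / ‖∇ sd‖`. -/
lemma fderiv_smoothStep_sd_calibField_le {ε : ℝ} (hε : 0 < ε) (hεφ : ε ≤ φ.rIn)
    (hφ : φ.rOut < δ) {v : RN N} (hv : ‖v‖ ≤ 1) (x : RN N) :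
    fderiv ℝ (fun y => smoothStep ε (sd N E y)) x (calibField φ E x) ≤
      fderiv ℝ (fun y => smoothStep ε (sd N E y)) x v := by
  by_cases hx : sd N E x < 0 ∨ ε < sd N E x
  · simp [(eventuallyEq_smoothStep_sd hε hx).fderiv_eq]
  push Not at hx
  have hin : |sd N E x| ≤ φ.rIn := abs_le.2 ⟨by linarith, by linarith⟩
  have hsd := (htube x (hin.trans_lt (φ.rIn_lt_rOut.trans hφ))).1
  have hd := ((contDiff_smoothStep (ε := ε) (n := 1)).differentiable one_ne_zero
    (sd N E x)).hasDerivAt.comp_hasFDerivAt x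
    (hsd.differentiableAt two_ne_zero).hasFDerivAt
  rw [show (fun y => smoothStep ε (sd N E y)) = smoothStep ε ∘ sd N E from rfl, hd.fderiv]
  simp only [FunLike.coe_smul, Pi.smul_apply, smul_eq_mul, fderiv_sd_calibField φ hin]
  exact mul_le_mul_of_nonpos_left (fderiv_apply_le_norm_gradient _ _ hv)
    (antitone_smoothStep hε).deriv_nonpos

lemma setIntegral_divg_le_calibField (hper : PerSet N E) (hfr : (frontier E).Nonempty)
    (hnull : volume (frontier E) = 0) (hφ : φ.rOut < δ) {X : RN N → RN N}
    (hX : IsTestField N X) :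
    ∫ x in E ∩ Qcube N, divg N X x ≤ ∫ x in E ∩ Qcube N, divg N (calibField φ E) x := by
  set ε : ℕ → ℝ := fun n => φ.rIn / (n + 1)
  have hpos : ∀ n, 0 < ε n := fun n => div_pos φ.rIn_pos n.cast_add_one_pos
  have hεφ : ∀ n, ε n ≤ φ.rIn := fun n =>
    div_le_self φ.rIn_pos.le (le_add_of_nonneg_left n.cast_nonneg)
  have hεδ : ∀ n, ε n < δ := fun n => (hεφ n).trans_lt (φ.rIn_lt_rOut.trans hφ)
  have hlim : Tendsto ε atTop (𝓝 0) := by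
    have := tendsto_one_div_add_atTop_nhds_zero_nat.const_mul φ.rIn
    rw [mul_zero] at this
    exact this.congr fun n => mul_one_div _ _
  have hXE := contDiff_calibField φ htube hφ
  refine le_of_tendsto_of_tendsto' (tendsto_integral_smoothStep_sd_mul hfr hnull hX.1 hpos hlim)
    (tendsto_integral_smoothStep_sd_mul hfr hnull hXE hpos hlim) fun n => ?_
  have hu := contDiff_smoothStep_sd htube (hpos n) (hεδ n)
  have hup : PerFun N fun x => smoothStep (ε n) (sd N E x) :=
    (perFun_sd hper).comp (smoothStep (ε n))
  rw [integral_mul_divg hu hX.1 hup hX.2.1,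
    integral_mul_divg hu hXE hup (perFun_calibField φ hper)]
  exact neg_le_neg (setIntegral_mono_on
    (integrableOn_Qcube (continuous_fderiv_apply hu hXE.continuous))
    (integrableOn_Qcube (continuous_fderiv_apply hu hX.1.continuous)) measurableSet_Qcube
    fun x _ => fderiv_smoothStep_sd_calibField_le φ htube (hpos n) (hεφ n) hφ (hX.2.2 x) x)

end Calibration

lemma exists_isCalibration {E : Set (RN N)} (hper : PerSet N E) (hsm : SmoothBdry N 2 E) :
    ∃ XE, IsCalibration N E XE := by
  rcases (frontier E).eq_empty_or_nonempty with hfr | hfr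
  · exact ⟨0, isCalibration_zero_of_frontier_eq_empty hfr⟩
  obtain ⟨δ, hδ, htube⟩ := exists_tube hper one_le_two hsm hfr
  let φ : ContDiffBump (0 : ℝ) := ⟨δ / 4, δ / 2, by positivity, by linarith⟩
  have hφ : φ.rOut < δ := by simp only [φ]; linarith
  exact ⟨calibField φ E, ⟨contDiff_calibField φ htube hφ, perFun_calibField φ hper,
    norm_calibField_le_one φ⟩, fun X hX => setIntegral_divg_le_calibField φ htube hper hfr
      (volume_frontier_eq_zero one_le_two hsm) hφ hX⟩

lemma setIntegral_inter_le_add_mul_symmDiff {α : Type*} [MeasurableSpace α] {μ : Measure α}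
    {s E F : Set α} (hs : MeasurableSet s) (hμs : μ s ≠ ⊤) (hE : MeasurableSet E)
    (hF : MeasurableSet F) {g : α → ℝ} (hg : IntegrableOn g s μ) {C : ℝ}
    (hgC : ∀ x ∈ s, |g x| ≤ C) :
    ∫ x in E ∩ s, g x ∂μ ≤ ∫ x in F ∩ s, g x ∂μ + C * μ.real (symmDiff E F ∩ s) := by
  have hpt : ∀ x ∈ s,
      E.indicator g x ≤ F.indicator g x + (symmDiff E F).indicator (fun _ => C) x := by
    intro x hx
    have := abs_le.1 (hgC x hx)
    by_cases hxE : x ∈ E <;> by_cases hxF : x ∈ F <;> simp [hxE, hxF, mem_symmDiff] <;> linarith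
  have hC : IntegrableOn ((symmDiff E F).indicator fun _ => C) s μ :=
    (integrableOn_const hμs).indicator (hE.symmDiff hF)
  calc ∫ x in E ∩ s, g x ∂μ = ∫ x in s, E.indicator g x ∂μ := by
        rw [setIntegral_indicator hE, inter_comm]
    _ ≤ ∫ x in s, (F.indicator g x + (symmDiff E F).indicator (fun _ => C) x) ∂μ :=
        setIntegral_mono_on (hg.indicator hE) ((hg.indicator hF).add hC) hs hpt
    _ = ∫ x in F ∩ s, g x ∂μ + C * μ.real (symmDiff E F ∩ s) := by
        rw [integral_add (hg.indicator hF) hC, setIntegral_indicator hF,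
          setIntegral_indicator (hE.symmDiff hF), setIntegral_const, smul_eq_mul, mul_comm,
          inter_comm s, inter_comm s]

/-- Lemma 4.1: for `E` of class `C²` and any set of finite perimeter
`F`, `P(F) - P(E) ≥ -C |E Δ F|`. -/
theorem stmt12 (N : ℕ) (E : Set (RN N))
    (hmeas : MeasurableSet E) (hper : PerSet N E) (hsm : SmoothBdry N 2 E) :
    ∃ C : ℝ, 0 < C ∧
      ∀ F : Set (RN N), PerSet N F → MeasurableSet F → tper N F ≠ ⊤ →
        tper N E ≤ tper N F + ENNReal.ofReal (C * (tvol N (symmDiff E F)).toReal) := by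
  obtain ⟨XE, hXE⟩ := exists_isCalibration hper hsm
  obtain ⟨C, hC, hbound⟩ := exists_bound_on_Qcube (continuous_divg hXE.1.1)
  refine ⟨C, hC, fun F _ hF _ => ?_⟩
  calc tper N E = ENNReal.ofReal (∫ x in E ∩ Qcube N, divg N XE x) := hXE.tper_eq
    _ ≤ ENNReal.ofReal
          ((∫ x in F ∩ Qcube N, divg N XE x) + C * (tvol N (symmDiff E F)).toReal) :=
        ENNReal.ofReal_le_ofReal (setIntegral_inter_le_add_mul_symmDiff measurableSet_Qcube
          volume_Qcube_ne_top hmeas hF (integrableOn_Qcube (continuous_divg hXE.1.1)) hbound)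
    _ ≤ ENNReal.ofReal (∫ x in F ∩ Qcube N, divg N XE x) +
          ENNReal.ofReal (C * (tvol N (symmDiff E F)).toReal) := ENNReal.ofReal_add_le
    _ ≤ tper N F + ENNReal.ofReal (C * (tvol N (symmDiff E F)).toReal) := by
        gcongr
        exact hXE.1.ofReal_integral_le_tper F
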